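/- Let G be a finitely generated, self-similar, contracting, post-critically finite group with alphabet S and nucleus N, and for n ∈ ℕ let Γ_n be the 'tile Schreier graph' with vertex set S^n and an edge labelled g ∈ N from v to w whenever Φ(g, v) = (w, 1). Then for any two words u, v ∈ S^n, the tiles K_u and K_v of the associated self-similar structure intersect if and only if there exists g ∈ N with Φ(g, u) = (v, 1); equivalently, the tile adjacency graph of level n is the simple graph obtained from the Schreier graph of G acting on S^n by removing loops, combining multiple edges, and deleting every edge from u to v labelled g for which Φ(g, u) = (v, h) with h ≠ 1. -/

import Mathlib

/-!
Statement 16: tiles of the self-similar structure associated with a post-critically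
finite self-similar group intersect exactly when some nucleus element maps one word to
the other with trivial residual state.
-/

namespace SSG

variable {G : Type} [Group G] {S : Type} [Fintype S]

/-- The state reached by `g` after reading the first `n` letters of `ξ`. -/
def ssState (Φ : G → S → S × G) (g : G) (ξ : ℕ → S) : ℕ → G
  | 0 => g
  | n + 1 => (Φ (ssState Φ g ξ n) (ξ n)).2

/-- The action of `g` on the infinite word `ξ`. -/
def ssAct (Φ : G → S → S × G) (g : G) (ξ : ℕ → S) : ℕ → S :=
  fun n => (Φ (ssState Φ g ξ n) (ξ n)).1

/-- The state reached by `g` after reading the finite word `v`. -/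
def ssStateWord (Φ : G → S → S × G) : G → List S → G
  | g, [] => g
  | g, s :: v => ssStateWord Φ (Φ g s).2 v

/-- The image/state pair produced by `g` on the finite word `v`:
`Φ(g, uv) = (u'v', g'')` where `Φ(g,u) = (u',g')` and `Φ(g',v) = (v',g'')`. -/
def ssActWord (Φ : G → S → S × G) : G → List S → List S × G
  | g, [] => ([], g)
  | g, s :: v =>
    ((Φ g s).1 :: (ssActWord Φ (Φ g s).2 v).1, (ssActWord Φ (Φ g s).2 v).2)

/-- `N` absorbs all states reached by sufficiently long words (contraction property). -/
def Contracting (Φ : G → S → S × G) (N : Finset G) : Prop :=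
  ∀ g : G, ∃ n : ℕ, ∀ v : List S, n ≤ v.length → ssStateWord Φ g v ∈ N

/-- The post-critical set: inputs read along left-infinite paths in the nucleus ending at a
non-identity state. -/
def postCritical (Φ : G → S → S × G) (N : Finset G) : Set (ℕ → S) :=
  {s | ∃ g : ℕ → G, (∀ k, g k ∈ N) ∧ g 0 ≠ 1 ∧ ∀ k, (Φ (g (k + 1)) (s k)).2 = g k}

/-- The asymptotic equivalence relation on left-infinite words defining the digit tile
`T(G)`: `w ≈ w'` iff there is a left-infinite path in the nucleus ending at the identity
state whose input labels spell `w` and output labels spell `w'`.  (Index `k` denotes the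
letter at position `-k-1`.) -/
def tileRel (Φ : G → S → S × G) (N : Finset G) (w w' : ℕ → S) : Prop :=
  ∃ g : ℕ → G, (∀ k, g k ∈ N) ∧ g 0 = 1 ∧ ∀ k, Φ (g (k + 1)) (w k) = (w' k, g k)

/-- The left-infinite word `w` followed by the finite word `v` (so the letter at position
`k` of the result, counting from the end, is the `k`-th letter of `v` from the end while
`k < |v|`). -/
def extendWord (v : List S) (w : ℕ → S) : ℕ → S := fun k =>
  if h : k < v.length then v.reverse.get ⟨k, by simpa using h⟩ else w (k - v.length)

/-- The tile `K_v` inside the digit tile `T(G) = S^{-ℕ}/≈`: the image of the set of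
left-infinite words ending in `v` under the coding map. -/
def tile (Φ : G → S → S × G) (N : Finset G) (v : List S) :
    Set (Quot (tileRel Φ N)) :=
  Set.range fun w : ℕ → S => Quot.mk (tileRel Φ N) (extendWord v w)

end SSG

/-!
Two left-infinite words ending in `u` and `v` code the same point exactly when some
left-infinite path in the nucleus ending at `1` reads the first and writes the second; the last
`|u|` steps of such a path are a nucleus element `g` with `Φ(g, u) = (v, 1)`. That this relation
is already the quotient relation rests on it being an equivalence: inverting or multiplying
paths pointwise gives paths whose states range over a finite set, and contraction pushes every
such path into `N`. Conversely, by minimality every element of `N` has a predecessor in `N`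
(those that do form a contracting set), so `Φ(g, u) = (v, 1)` with `g ∈ N` extends to the left
to a whole path.
-/

namespace SSG

variable {G : Type} {S : Type} {Φ : G → S → S × G} {N : Finset G}

lemma extendWord_add_length (u : List S) (ξ : ℕ → S) (k : ℕ) :
    extendWord u ξ (k + u.length) = ξ k := by
  simp [extendWord]

lemma extendWord_cons (a : S) (u : List S) (ξ : ℕ → S) :
    extendWord (a :: u) ξ = extendWord u (extendWord [a] ξ) := by
  funext k
  rcases lt_trichotomy k u.length with hk | rfl | hk
  · simp [extendWord, hk, Nat.lt_succ_of_lt hk, List.getElem_append_left]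
  · simp [extendWord]
  · obtain ⟨j, rfl⟩ := Nat.exists_eq_add_of_lt hk
    rw [show u.length + j + 1 = j + (a :: u).length by simp; omega, extendWord_add_length,
      show j + (a :: u).length = (j + 1) + u.length by simp; omega, extendWord_add_length]
    rfl

lemma ssStateWord_append_singleton (g : G) (v : List S) (s : S) :
    ssStateWord Φ g (v ++ [s]) = (Φ (ssStateWord Φ g v) s).2 := by
  induction v generalizing g with
  | nil => rfl
  | cons t v ih => exact ih _

lemma Contracting.mem_of_forall_mem_finset (hN : Contracting Φ N) {F : Finset G} {g : ℕ → G}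
    {w : ℕ → S} (hF : ∀ k, g k ∈ F) (hg : ∀ k, (Φ (g (k + 1)) (w k)).2 = g k) (k : ℕ) :
    g k ∈ N := by
  choose n hn using hN
  have hread : ∀ j, ∃ v : List S, v.length = j ∧ ssStateWord Φ (g (k + j)) v = g k := by
    intro j
    induction j with
    | zero => exact ⟨[], rfl, rfl⟩
    | succ j ih =>
      obtain ⟨v, hv, hgv⟩ := ih
      refine ⟨w (k + j) :: v, by simp [hv], ?_⟩
      rw [ssStateWord, ← add_assoc, hg, hgv]
  obtain ⟨v, hv, hgv⟩ := hread (F.sup n)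
  rw [← hgv]
  exact hn _ v (by rw [hv]; exact Finset.le_sup (hF _))

lemma exists_mem_snd_eq_of_minimal (hNclosed : ∀ g ∈ N, ∀ s : S, (Φ g s).2 ∈ N)
    (hN : Contracting Φ N) (hNmin : ∀ N' : Finset G, Contracting Φ N' → N ⊆ N')
    {g : G} (hg : g ∈ N) : ∃ h ∈ N, ∃ s : S, (Φ h s).2 = g := by
  classical
  suffices Contracting Φ (N.filter fun x => ∃ h ∈ N, ∃ s : S, (Φ h s).2 = x) from
    (Finset.mem_filter.1 (hNmin _ this hg)).2
  intro x
  obtain ⟨n, hn⟩ := hN x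
  refine ⟨n + 1, fun v hv => ?_⟩
  obtain ⟨v, s, rfl⟩ : ∃ v' s, v = v' ++ [s] :=
    (List.eq_nil_or_concat' v).resolve_left (by rintro rfl; simp at hv)
  have hxv : ssStateWord Φ x v ∈ N := hn v (by simpa using hv)
  rw [ssStateWord_append_singleton]
  exact Finset.mem_filter.2 ⟨hNclosed _ hxv s, _, hxv, s, rfl⟩

lemma exists_path_of_mem (hNclosed : ∀ g ∈ N, ∀ s : S, (Φ g s).2 ∈ N)
    (hN : Contracting Φ N) (hNmin : ∀ N' : Finset G, Contracting Φ N' → N ⊆ N')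
    {x : G} (hx : x ∈ N) :
    ∃ (h : ℕ → G) (ξ ξ' : ℕ → S), (∀ k, h k ∈ N) ∧ h 0 = x ∧
      ∀ k, Φ (h (k + 1)) (ξ k) = (ξ' k, h k) := by
  choose pred hpred s hs using fun y : N => exists_mem_snd_eq_of_minimal hNclosed hN hNmin y.2
  let h : ℕ → N := fun k => (fun y => ⟨pred y, hpred y⟩)^[k] ⟨x, hx⟩
  have hstep : ∀ k, h (k + 1) = ⟨pred (h k), hpred (h k)⟩ := fun k =>
    Function.iterate_succ_apply' _ _ _
  refine ⟨fun k => h k, fun k => s (h k), fun k => (Φ (h (k + 1)) (s (h k))).1,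
    fun k => (h k).2, rfl, fun k => Prod.ext rfl ?_⟩
  simp only [hstep, hs]

lemma ssActWord_eq_of_path {g : ℕ → G} {u v : List S} (huv : u.length = v.length)
    {ξ ξ' : ℕ → S}
    (hg : ∀ k, Φ (g (k + 1)) (extendWord u ξ k) = (extendWord v ξ' k, g k)) :
    ssActWord Φ (g u.length) u = (v, g 0) := by
  induction u generalizing v ξ ξ' with
  | nil =>
    obtain rfl := List.eq_nil_of_length_eq_zero huv.symm
    rfl
  | cons a u ih =>
    obtain _ | ⟨b, v⟩ := v
    · simp at huv
    rw [extendWord_cons a u, extendWord_cons b v] at hg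
    have huv : u.length = v.length := by simpa using huv
    have hfirst : Φ (g (u.length + 1)) a = (b, g u.length) := by
      simpa [extendWord, huv] using hg u.length
    simp [ssActWord, hfirst, ih huv hg]

lemma exists_path_extendWord_of_ssActWord (hNclosed : ∀ g ∈ N, ∀ s : S, (Φ g s).2 ∈ N)
    {h : ℕ → G} {ξ ξ' : ℕ → S} (hN : ∀ k, h k ∈ N)
    (hh : ∀ k, Φ (h (k + 1)) (ξ k) = (ξ' k, h k))
    {u v : List S} {y : G} (hact : ssActWord Φ (h 0) u = (v, y)) :
    ∃ g : ℕ → G, (∀ k, g k ∈ N) ∧ g 0 = y ∧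
      ∀ k, Φ (g (k + 1)) (extendWord u ξ k) = (extendWord v ξ' k, g k) := by
  induction u generalizing h ξ ξ' v with
  | nil =>
    obtain ⟨rfl, rfl⟩ := Prod.ext_iff.1 hact
    exact ⟨h, hN, rfl, hh⟩
  | cons a u ih =>
    simp only [ssActWord, Prod.mk.injEq] at hact
    obtain ⟨rfl, rfl⟩ := hact
    let h' : ℕ → G := fun
      | 0 => (Φ (h 0) a).2
      | k + 1 => h k
    have hN' : ∀ k, h' k ∈ N := fun
      | 0 => hNclosed _ (hN 0) a
      | k + 1 => hN k
    have hh' : ∀ k, Φ (h' (k + 1)) (extendWord [a] ξ k) =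
        (extendWord [(Φ (h 0) a).1] ξ' k, h' k) := fun
      | 0 => rfl
      | k + 1 => hh k
    rw [extendWord_cons a u, extendWord_cons _ (ssActWord Φ _ u).1]
    exact ih hN' hh' rfl

section Group

variable [Group G]

open scoped Pointwise

lemma map_inv_fst_map (hone : ∀ s : S, Φ 1 s = (s, 1))
    (hcoc : ∀ (g h : G) (s : S),
      Φ (g * h) s = ((Φ g (Φ h s).1).1, (Φ g (Φ h s).1).2 * (Φ h s).2))
    (g : G) (s : S) : Φ g⁻¹ (Φ g s).1 = (s, (Φ g s).2⁻¹) := by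
  have h := hcoc g⁻¹ g s
  rw [inv_mul_cancel, hone, Prod.ext_iff] at h
  exact Prod.ext h.1.symm (eq_inv_of_mul_eq_one_left h.2.symm)

lemma tileRel_refl (hone : ∀ s : S, Φ 1 s = (s, 1)) (hNone : (1 : G) ∈ N) (w : ℕ → S) :
    tileRel Φ N w w :=
  ⟨fun _ => 1, fun _ => hNone, rfl, fun k => hone (w k)⟩

lemma tileRel_symm (hone : ∀ s : S, Φ 1 s = (s, 1))
    (hcoc : ∀ (g h : G) (s : S),
      Φ (g * h) s = ((Φ g (Φ h s).1).1, (Φ g (Φ h s).1).2 * (Φ h s).2))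
    (hN : Contracting Φ N) {w w' : ℕ → S} (h : tileRel Φ N w w') : tileRel Φ N w' w := by
  classical
  obtain ⟨g, hgN, hg0, hg⟩ := h
  have hstep : ∀ k, Φ (g (k + 1))⁻¹ (w' k) = (w k, (g k)⁻¹) := fun k => by
    simpa [hg k] using map_inv_fst_map hone hcoc (g (k + 1)) (w k)
  refine ⟨fun k => (g k)⁻¹, fun k => ?_, by simp [hg0], hstep⟩
  exact hN.mem_of_forall_mem_finset (F := N.image (·⁻¹)) (g := fun k => (g k)⁻¹)
    (fun k => Finset.mem_image_of_mem _ (hgN k)) (fun k => by rw [hstep k]) k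

lemma tileRel_trans
    (hcoc : ∀ (g h : G) (s : S),
      Φ (g * h) s = ((Φ g (Φ h s).1).1, (Φ g (Φ h s).1).2 * (Φ h s).2))
    (hN : Contracting Φ N) {w w' w'' : ℕ → S} (h₁ : tileRel Φ N w w')
    (h₂ : tileRel Φ N w' w'') : tileRel Φ N w w'' := by
  classical
  obtain ⟨g, hgN, hg0, hg⟩ := h₁
  obtain ⟨g', hg'N, hg'0, hg'⟩ := h₂
  have hstep : ∀ k, Φ (g' (k + 1) * g (k + 1)) (w k) = (w'' k, g' k * g k) := fun k => by
    rw [hcoc, hg k, hg' k]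
  refine ⟨fun k => g' k * g k, fun k => ?_, by simp [hg0, hg'0], hstep⟩
  exact hN.mem_of_forall_mem_finset (F := N * N) (g := fun k => g' k * g k)
    (fun k => Finset.mul_mem_mul (hg'N k) (hgN k)) (fun k => by rw [hstep k]) k

lemma tileRel_equivalence (hone : ∀ s : S, Φ 1 s = (s, 1))
    (hcoc : ∀ (g h : G) (s : S),
      Φ (g * h) s = ((Φ g (Φ h s).1).1, (Φ g (Φ h s).1).2 * (Φ h s).2))
    (hNone : (1 : G) ∈ N) (hN : Contracting Φ N) : Equivalence (tileRel Φ N) :=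
  ⟨tileRel_refl hone hNone, tileRel_symm hone hcoc hN, tileRel_trans hcoc hN⟩

end Group

end SSG

open SSG in
theorem tiles_intersect_iff_nucleus_transition_general
    {G : Type} [Group G] {S : Type}
    (Φ : G → S → S × G)
    (hone : ∀ s : S, Φ 1 s = (s, 1))
    (hcoc : ∀ (g h : G) (s : S),
      Φ (g * h) s = ((Φ g (Φ h s).1).1, (Φ g (Φ h s).1).2 * (Φ h s).2))
    (N : Finset G)
    (hNone : (1 : G) ∈ N)
    (hNclosed : ∀ g ∈ N, ∀ s : S, (Φ g s).2 ∈ N)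
    (hNcontr : Contracting Φ N)
    (hNmin : ∀ N' : Finset G, Contracting Φ N' → N ⊆ N') :
    ∀ u v : List S, u.length = v.length →
      ((tile Φ N u ∩ tile Φ N v).Nonempty ↔
        ∃ g ∈ N, ssActWord Φ g u = (v, (1 : G))) := by
  intro u v huv
  constructor
  · rintro ⟨_, ⟨ξ, rfl⟩, ⟨ξ', hξ'⟩⟩
    have hrel : tileRel Φ N (extendWord u ξ) (extendWord v ξ') :=
      (tileRel_equivalence hone hcoc hNone hNcontr).eqvGen_iff.1 (Quot.eq.1 hξ'.symm)
    obtain ⟨g, hgN, hg0, hg⟩ := hrel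
    exact ⟨g u.length, hgN _, hg0 ▸ ssActWord_eq_of_path huv hg⟩
  · rintro ⟨g, hgN, hg⟩
    obtain ⟨h, ξ, ξ', hhN, rfl, hh⟩ := exists_path_of_mem hNclosed hNcontr hNmin hgN
    obtain ⟨g', hg'N, hg'0, hg'⟩ := exists_path_extendWord_of_ssActWord hNclosed hhN hh hg
    exact ⟨_, ⟨ξ, rfl⟩, ⟨ξ', (Quot.sound ⟨g', hg'N, hg'0, hg'⟩).symm⟩⟩

open SSG in
/-- **Tiles intersect exactly along nucleus transitions with trivial residual state**
(Proposition 2.7): for a finitely generated bounded (post-critically finite) self-similar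
group `G` with nucleus `N`, and words `u, v ∈ S^n`, the tiles `K_u` and `K_v` of the
associated self-similar structure intersect if and only if some `g ∈ N` satisfies
`Φ(g, u) = (v, 1)`.  Equivalently, the tile adjacency graph of level `n` is the simple
graph obtained from the Schreier graph of `G` acting on `S^n` by removing loops, combining
multiple edges, and deleting every `g`-labelled edge from `u` to `v` with
`Φ(g,u) = (v,h)`, `h ≠ 1`. -/
theorem tiles_intersect_iff_nucleus_transition
    {G : Type} [Group G] {S : Type} [Fintype S]
    (Φ : G → S → S × G)
    (hone : ∀ s : S, Φ 1 s = (s, 1))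
    (hcoc : ∀ (g h : G) (s : S),
      Φ (g * h) s = ((Φ g (Φ h s).1).1, (Φ g (Φ h s).1).2 * (Φ h s).2))
    (hfaithful : ∀ g : G, (∀ ξ : ℕ → S, ssAct Φ g ξ = ξ) → g = 1)
    (hfg : Group.FG G)
    (N : Finset G)
    (hNone : (1 : G) ∈ N)
    (hNclosed : ∀ g ∈ N, ∀ s : S, (Φ g s).2 ∈ N)
    (hNcontr : Contracting Φ N)
    (hNmin : ∀ N' : Finset G, Contracting Φ N' → N ⊆ N')
    (hpcf : (postCritical Φ N).Finite) :
    ∀ u v : List S, u.length = v.length →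
      ((tile Φ N u ∩ tile Φ N v).Nonempty ↔
        ∃ g ∈ N, ssActWord Φ g u = (v, (1 : G))) :=
  tiles_intersect_iff_nucleus_transition_general Φ hone hcoc N hNone hNclosed hNcontr hNmin
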